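/- arXiv:2512.22798 — 6 statements merged into one kernel-verified Lean document; each statement's English description precedes it below -/
import Mathlib

section
/- Let 1/10 < σ < 1/2 and let t₁,…,tₙ be nonnegative reals with t₁+⋯+tₙ = 1. Then at least one of the following holds: (1) some tᵢ ≥ 1/2 + σ; (2) there is a partition {1,…,n} = S ⊔ T with 1/2 − σ < Σ_{i∈S} tᵢ ≤ Σ_{i∈T} tᵢ < 1/2 + σ; (3) there exist distinct indices i, j, k with 2σ ≤ tᵢ ≤ tⱼ ≤ t_k ≤ 1/2 − σ and tᵢ+tⱼ, tᵢ+t_k, tⱼ+t_k all at least 1/2 + σ. Moreover, if σ > 1/6 then case (3) cannot occur. -/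
/-!
If neither (1) nor (2) holds, no subset sum of the `tᵢ` lies in `(1/2 - σ, 1/2 + σ)` and every
`tᵢ ≤ 1/2 - σ`. Adding elements one at a time to a set whose sum is at most `1/2 - σ` until the
sum exceeds `1/2 - σ`, the last element added must jump over the whole gap, so it has weight at
least `2σ`. Doing this three times, starting from suitable sets, produces three distinct
elements of weight `≥ 2σ`; since `4σ > 1/2 - σ`, any two of them again sum past the gap.
If `σ > 1/6`, the two largest of such a triple have sum at most `1 - 2σ < 1/2 + σ`.
-/

open Finset Set

variable {ι : Type*}

lemma Finset.exists_sum_le_lt_sum_add {M : Type*} [AddCommMonoid M] [LinearOrder M]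
    [DecidableEq ι] (t : ι → M) {c α : M} (s : Finset ι) (hc : c ≤ α)
    (hs : α < c + ∑ i ∈ s, t i) :
    ∃ A ⊆ s, ∃ i ∈ s, i ∉ A ∧ c + ∑ j ∈ A, t j ≤ α ∧ α < c + ∑ j ∈ A, t j + t i := by
  induction s using Finset.induction_on with
  | empty => simp only [sum_empty, add_zero] at hs; exact absurd hc (not_le.mpr hs)
  | insert a s ha ih =>
    rw [sum_insert ha] at hs
    by_cases hlt : α < c + ∑ i ∈ s, t i
    · obtain ⟨A, hAs, i, his, hiA, hle, hgt⟩ := ih hlt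
      exact ⟨A, hAs.trans (subset_insert a s), i, mem_insert_of_mem his, hiA, hle, hgt⟩
    · refine ⟨s, subset_insert a s, a, mem_insert_self a s, ha, not_lt.mp hlt, ?_⟩
      rwa [add_assoc, add_comm (∑ i ∈ s, t i)]

def SubsetSumsAvoid {M : Type*} [AddCommMonoid M] (t : ι → M) (s : Set M) : Prop :=
  ∀ S : Finset ι, ∑ i ∈ S, t i ∉ s

namespace SubsetSumsAvoid

variable {t : ι → ℝ} {α β : ℝ}

lemma le_sum (h : SubsetSumsAvoid t (Ioo α β)) {S : Finset ι} (hS : α < ∑ i ∈ S, t i) :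
    β ≤ ∑ i ∈ S, t i :=
  not_lt.mp fun hβ => h S ⟨hS, hβ⟩

lemma sum_le (h : SubsetSumsAvoid t (Ioo α β)) {S : Finset ι} (hS : ∑ i ∈ S, t i < β) :
    ∑ i ∈ S, t i ≤ α :=
  not_lt.mp fun hα => h S ⟨hα, hS⟩

variable [DecidableEq ι]

lemma exists_mem_sdiff_sub_le (h : SubsetSumsAvoid t (Ioo α β)) {C s : Finset ι} (hCs : C ⊆ s)
    (hC : ∑ i ∈ C, t i ≤ α) (hs : α < ∑ i ∈ s, t i) : ∃ i ∈ s \ C, β - α ≤ t i := by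
  rw [← sum_sdiff hCs, add_comm] at hs
  obtain ⟨A, hA, i, hi, hiA, hle, hgt⟩ := exists_sum_le_lt_sum_add t (s \ C) hC hs
  have hdisj : Disjoint C (insert i A) :=
    disjoint_sdiff.mono_right (insert_subset hi hA)
  have hsum : ∑ j ∈ C ∪ insert i A, t j = ∑ j ∈ C, t j + ∑ j ∈ A, t j + t i := by
    rw [sum_union hdisj, sum_insert hiA]; ring
  have hβ := h.le_sum (S := C ∪ insert i A) (by rw [hsum]; exact hgt)
  exact ⟨i, hi, by linarith⟩

lemma exists_three_sub_le [Fintype ι] (h : SubsetSumsAvoid t (Ioo α β)) (hsum : ∑ i, t i = 1)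
    (hα₀ : 0 ≤ α) (hα : α < 1 / 2) (hle : ∀ i, t i ≤ α) :
    ∃ i j k, i ≠ j ∧ i ≠ k ∧ j ≠ k ∧ β - α ≤ t i ∧ β - α ≤ t j ∧ β - α ≤ t k := by
  have hsum_erase : ∀ i, ∑ j ∈ univ.erase i, t j = 1 - t i := fun i => by
    rw [← hsum, ← sum_erase_add _ _ (mem_univ i), add_sub_cancel_right]
  obtain ⟨i, -, hi⟩ := h.exists_mem_sdiff_sub_le (empty_subset univ) (by simpa using hα₀)
    (by linarith)
  obtain ⟨j, hj, hj'⟩ := h.exists_mem_sdiff_sub_le (empty_subset (univ.erase i))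
    (by simpa using hα₀) (by linarith [hsum_erase i, hle i])
  have hji : j ≠ i := ne_of_mem_erase (sdiff_subset hj)
  obtain ⟨k, hk, hk'⟩ := h.exists_mem_sdiff_sub_le (singleton_subset_iff.mpr (mem_erase.mpr
    ⟨hji.symm, mem_univ i⟩)) (by simpa using hle i) (by linarith [hsum_erase j, hle j])
  simp only [Finset.mem_sdiff, Finset.mem_erase, Finset.mem_singleton] at hk
  exact ⟨i, j, k, hji.symm, Ne.symm hk.2, Ne.symm hk.1.1, hi, hj', hk'⟩

end SubsetSumsAvoid

lemma exists_sorted_triple {α : Type*} [LinearOrder α] (f : ι → α) {p : ι → Prop} {i j k : ι}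
    (hij : i ≠ j) (hik : i ≠ k) (hjk : j ≠ k) (hi : p i) (hj : p j) (hk : p k) :
    ∃ a b c, p a ∧ p b ∧ p c ∧ a ≠ b ∧ a ≠ c ∧ b ≠ c ∧ f a ≤ f b ∧ f b ≤ f c := by
  rcases le_total (f i) (f j) with h₁ | h₁ <;> rcases le_total (f i) (f k) with h₂ | h₂ <;>
    rcases le_total (f j) (f k) with h₃ | h₃ <;>
    first
    | (refine ⟨i, j, k, hi, hj, hk, hij, hik, hjk, ?_, ?_⟩ <;> order)
    | (refine ⟨i, k, j, hi, hk, hj, hik, hij, hjk.symm, ?_, ?_⟩ <;> order)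
    | (refine ⟨j, i, k, hj, hi, hk, hij.symm, hjk, hik, ?_, ?_⟩ <;> order)
    | (refine ⟨j, k, i, hj, hk, hi, hjk, hij.symm, hik.symm, ?_, ?_⟩ <;> order)
    | (refine ⟨k, i, j, hk, hi, hj, hik.symm, hjk.symm, hij, ?_, ?_⟩ <;> order)
    | (refine ⟨k, j, i, hk, hj, hi, hjk.symm, hik.symm, hij.symm, ?_, ?_⟩ <;> order)

lemma exists_balanced_split_of_mem_Ioo [Fintype ι] [DecidableEq ι] {t : ι → ℝ}
    (hsum : ∑ i, t i = 1) {σ : ℝ} {S : Finset ι} (hS : ∑ i ∈ S, t i ∈ Ioo (1 / 2 - σ) (1 / 2 + σ)) :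
    ∃ S : Finset ι, 1 / 2 - σ < ∑ i ∈ S, t i ∧ ∑ i ∈ S, t i ≤ ∑ i ∈ Sᶜ, t i ∧
      ∑ i ∈ Sᶜ, t i < 1 / 2 + σ := by
  have hcompl : ∀ S : Finset ι, ∑ i ∈ Sᶜ, t i = 1 - ∑ i ∈ S, t i := fun S => by
    rw [← hsum, ← sum_add_sum_compl S t, add_sub_cancel_left]
  rcases le_total (∑ i ∈ S, t i) (∑ i ∈ Sᶜ, t i) with hle | hle
  · exact ⟨S, hS.1, hle, by linarith [hcompl S, hS.1]⟩
  · exact ⟨Sᶜ, by linarith [hcompl S, hS.2], by rwa [compl_compl], by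
      rw [compl_compl]; exact hS.2⟩

theorem stmt_1_general (σ : ℝ) (hσ1 : 1 / 10 < σ) (hσ2 : σ < 1 / 2) (n : ℕ)
    (t : Fin n → ℝ) (hsum : ∑ i, t i = 1) :
    ((∃ i, 1 / 2 + σ ≤ t i) ∨
      (∃ S : Finset (Fin n),
        1 / 2 - σ < ∑ i ∈ S, t i ∧ ∑ i ∈ S, t i ≤ ∑ i ∈ Sᶜ, t i ∧
          ∑ i ∈ Sᶜ, t i < 1 / 2 + σ) ∨
      (∃ i j k : Fin n, i ≠ j ∧ i ≠ k ∧ j ≠ k ∧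
        2 * σ ≤ t i ∧ t i ≤ t j ∧ t j ≤ t k ∧ t k ≤ 1 / 2 - σ ∧
        1 / 2 + σ ≤ t i + t j ∧ 1 / 2 + σ ≤ t i + t k ∧ 1 / 2 + σ ≤ t j + t k)) ∧
    (1 / 6 < σ →
      ¬ ∃ i j k : Fin n, i ≠ j ∧ i ≠ k ∧ j ≠ k ∧
        2 * σ ≤ t i ∧ t i ≤ t j ∧ t j ≤ t k ∧ t k ≤ 1 / 2 - σ ∧
        1 / 2 + σ ≤ t i + t j ∧ 1 / 2 + σ ≤ t i + t k ∧ 1 / 2 + σ ≤ t j + t k) := by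
  refine ⟨?_, fun hσ ⟨i, j, k, _, _, _, _, _, hjk, hk, _, _, hsum_jk⟩ => by linarith⟩
  rw [or_iff_not_imp_left, or_iff_not_imp_left]
  intro hlarge hsplit
  push Not at hlarge
  have hgap : SubsetSumsAvoid t (Ioo (1 / 2 - σ) (1 / 2 + σ)) :=
    fun S hS => hsplit (exists_balanced_split_of_mem_Ioo hsum hS)
  have hle : ∀ i, t i ≤ 1 / 2 - σ := fun i => by
    simpa using hgap.sum_le (S := {i}) (by simpa using hlarge i)
  have hpair : ∀ a b, a ≠ b → 2 * σ ≤ t a → 2 * σ ≤ t b → 1 / 2 + σ ≤ t a + t b :=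
    fun a b hab ha hb => by
      simpa [sum_pair hab] using hgap.le_sum (S := {a, b}) (by rw [sum_pair hab]; linarith)
  obtain ⟨i, j, k, hij, hik, hjk, hi, hj, hk⟩ := 
    hgap.exists_three_sub_le hsum (by linarith) (by linarith) hle
  obtain ⟨a, b, c, ha, hb, hc, hab, hac, hbc, hab', hbc'⟩ :=
    exists_sorted_triple t (p := fun x => 2 * σ ≤ t x) hij hik hjk
      (by linarith) (by linarith) (by linarith)
  exact ⟨a, b, c, hab, hac, hbc, ha, hab', hbc', hle c, hpair a b hab ha hb,
    hpair a c hac ha hc, hpair b c hbc hb hc⟩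

/-- Lemma 2.2 (combinatorial lemma of Polymath): for `1/10 < σ < 1/2` and nonnegative
reals `t₁,…,tₙ` summing to `1`, one of the three listed conditions holds; moreover if
`σ > 1/6` the third condition cannot occur. -/
theorem stmt_1 (σ : ℝ) (hσ1 : 1 / 10 < σ) (hσ2 : σ < 1 / 2) (n : ℕ) (hn : 0 < n)
    (t : Fin n → ℝ) (ht : ∀ i, 0 ≤ t i) (hsum : ∑ i, t i = 1) :
    ((∃ i, 1 / 2 + σ ≤ t i) ∨
      (∃ S : Finset (Fin n),
        1 / 2 - σ < ∑ i ∈ S, t i ∧ ∑ i ∈ S, t i ≤ ∑ i ∈ Sᶜ, t i ∧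
          ∑ i ∈ Sᶜ, t i < 1 / 2 + σ) ∨
      (∃ i j k : Fin n, i ≠ j ∧ i ≠ k ∧ j ≠ k ∧
        2 * σ ≤ t i ∧ t i ≤ t j ∧ t j ≤ t k ∧ t k ≤ 1 / 2 - σ ∧
        1 / 2 + σ ≤ t i + t j ∧ 1 / 2 + σ ≤ t i + t k ∧ 1 / 2 + σ ≤ t j + t k)) ∧
    (1 / 6 < σ →
      ¬ ∃ i j k : Fin n, i ≠ j ∧ i ≠ k ∧ j ≠ k ∧
        2 * σ ≤ t i ∧ t i ≤ t j ∧ t j ≤ t k ∧ t k ≤ 1 / 2 - σ ∧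
        1 / 2 + σ ≤ t i + t j ∧ 1 / 2 + σ ≤ t i + t k ∧ 1 / 2 + σ ≤ t j + t k) :=
  stmt_1_general σ hσ1 hσ2 n t hsum
end

section
/- Let 7/24 < σ < 1/3 and let t₁,…,tₙ be nonnegative real numbers with t₁+⋯+tₙ = 1. Then either some tᵢ ≥ σ, or there exists a subset S ⊆ {1,…,n} such that 1 − 3σ < Σ_{i∈S} tᵢ ≤ 1/4. -/
/-!
Put `δ = 1 - 3σ`, so `0 < δ < 1/8`, and assume every `tᵢ < σ`. If the `tᵢ ≤ δ` add up to more than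
`δ`, adding them one at a time the partial sums first cross `δ` by a step of at most `δ`, landing in
`(δ, 2δ] ⊆ (δ, 1/4]`. Otherwise the `tᵢ > δ` carry total mass at least `3σ`; if none of them lies in
`(δ, 1/4]` they all lie in `(1/4, σ)`, so there are at least three of them, any three of them add up
to something in `(3/4, 3σ)`, and the complement of those three has sum in `(1 - 3σ, 1/4)`.
-/

open Finset

section

variable {ι M : Type*} [AddCommMonoid M] [LinearOrder M] [IsOrderedAddMonoid M]

theorem exists_subset_sum_mem_Ioc {s : Finset ι} {f : ι → M} {a b : M} (ha : 0 ≤ a)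
    (hb : ∀ i ∈ s, f i ≤ b) (hs : a < ∑ i ∈ s, f i) :
    ∃ T ⊆ s, ∑ i ∈ T, f i ∈ Set.Ioc a (a + b) := by
  classical
  induction s using Finset.induction_on with
  | empty => exact absurd ha (by simpa using hs)
  | insert j s hj ih =>
    by_cases h : a < ∑ i ∈ s, f i
    · obtain ⟨T, hTs, hT⟩ := ih (fun i hi => hb i (mem_insert_of_mem hi)) h
      exact ⟨T, hTs.trans (subset_insert j s), hT⟩
    · refine ⟨insert j s, Subset.rfl, hs, ?_⟩
      rw [sum_insert hj, add_comm]
      exact add_le_add (not_lt.1 h) (hb j (mem_insert_self j s))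

end

theorem sum_mem_Ioo_of_forall_mem_Ioo {ι M : Type*} [AddCommMonoid M] [PartialOrder M]
    [IsOrderedCancelAddMonoid M] {s : Finset ι} (hs : s.Nonempty) {f : ι → M} {a b : M}
    (h : ∀ i ∈ s, f i ∈ Set.Ioo a b) : ∑ i ∈ s, f i ∈ Set.Ioo (#s • a) (#s • b) := by
  rw [← sum_const, ← sum_const]
  exact ⟨sum_lt_sum_of_nonempty hs fun i hi => (h i hi).1,
    sum_lt_sum_of_nonempty hs fun i hi => (h i hi).2⟩

theorem stmt_2_general (σ : ℝ) (hσ1 : 7 / 24 < σ) (hσ2 : σ < 1 / 3) (n : ℕ)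
    (t : Fin n → ℝ) (hsum : ∑ i, t i = 1) :
    (∃ i, σ ≤ t i) ∨
      ∃ S : Finset (Fin n), 1 - 3 * σ < ∑ i ∈ S, t i ∧ ∑ i ∈ S, t i ≤ 1 / 4 := by
  by_cases hbig : ∃ i, σ ≤ t i
  · exact Or.inl hbig
  push Not at hbig
  right
  by_cases hsmall : 1 - 3 * σ < ∑ i with t i ≤ 1 - 3 * σ, t i
  · obtain ⟨T, -, hT⟩ :=
      exists_subset_sum_mem_Ioc (by linarith) (fun i hi => (mem_filter.1 hi).2) hsmall
    exact ⟨T, hT.1, by linarith [hT.2]⟩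
  by_cases hmid : ∃ i, 1 - 3 * σ < t i ∧ t i ≤ 1 / 4
  · obtain ⟨i, hi⟩ := hmid
    exact ⟨{i}, by simpa using hi⟩
  push Not at hmid
  set L := univ.filter fun i => ¬t i ≤ 1 - 3 * σ
  have hL : ∀ i ∈ L, t i ∈ Set.Ioo (1 / 4) σ := fun i hi =>
    ⟨hmid i (not_le.1 (mem_filter.1 hi).2), hbig i⟩
  have hLsum : 3 * σ ≤ ∑ i ∈ L, t i := by
    linarith [sum_filter_add_sum_filter_not univ (fun i => t i ≤ 1 - 3 * σ) t]
  have hLcard : 3 ≤ #L := by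
    have := sum_le_card_nsmul L t σ fun i hi => (hL i hi).2.le
    rw [nsmul_eq_mul] at this
    exact_mod_cast le_of_mul_le_mul_right (hLsum.trans this) (by linarith)
  obtain ⟨T, hTL, hTcard⟩ := exists_subset_card_eq hLcard
  have hT := sum_mem_Ioo_of_forall_mem_Ioo (card_pos.1 (by omega)) fun i hi => hL i (hTL hi)
  simp only [hTcard, nsmul_eq_mul, Nat.cast_ofNat, Set.mem_Ioo] at hT
  have hcompl := sum_compl_add_sum T t
  exact ⟨Tᶜ, by linarith, by linarith⟩

/-- Lemma 2.3 (Fouvry–Iwaniec): for `7/24 < σ < 1/3` and nonnegative reals `t₁,…,tₙ`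
summing to `1`, either some `tᵢ ≥ σ` or some subsum lies in `(1 − 3σ, 1/4]`. -/
theorem stmt_2 (σ : ℝ) (hσ1 : 7 / 24 < σ) (hσ2 : σ < 1 / 3) (n : ℕ) (hn : 0 < n)
    (t : Fin n → ℝ) (ht : ∀ i, 0 ≤ t i) (hsum : ∑ i, t i = 1) :
    (∃ i, σ ≤ t i) ∨
      ∃ S : Finset (Fin n), 1 - 3 * σ < ∑ i ∈ S, t i ∧ ∑ i ∈ S, t i ≤ 1 / 4 :=
  stmt_2_general σ hσ1 hσ2 n t hsum
end

section
/- Heath-Brown's identity with k = 4: for any positive integer n < 2x, Λ(n) = Σ_{j=1}^{4} (−1)^{j+1} C(4,j) Σ_{m₁,…,m_j ≤ x^{1/4}} μ(m₁)⋯μ(m_j) Σ_{m₁⋯m_j n₁⋯n_j = n} log n₁, where the inner sum ranges over positive integers n₁,…,n_j whose product with m₁⋯m_j equals n. -/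
/-!
Write `μ≤z` for the Möbius function truncated to `[1, z]`. Since `∑_{d ∣ m} μ d = [m = 1]`, the
function `1 - ζ * μ≤z` vanishes on `[0, z]`, so `(1 - ζ * μ≤z) ^ 4` vanishes on `[0, z ^ 4]` and,
as `Λ` vanishes below `2`, `Λ * (1 - ζ * μ≤z) ^ 4` vanishes below `2 z ^ 4 = 2 x`. Expanding the
fourth power binomially and using `Λ * ζ = log` turns this into the identity; the tuple sums are
the values of the Dirichlet products `μ≤z ^ j * log * ζ ^ (j - 1)`.
-/

open Finset ArithmeticFunction
open scoped ArithmeticFunction.zeta ArithmeticFunction.Moebius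

theorem eq_sum_zsmul_choose_add_mul_one_sub_mul_pow {R : Type*} [CommRing R] {a b l : R}
    (h : a * b = l) (c : R) (k : ℕ) :
    a = ∑ j ∈ range k, ((-1) ^ j * k.choose (j + 1) : ℤ) • (c ^ (j + 1) * (l * b ^ j)) +
      a * (1 - b * c) ^ k := by
  have hbinom : (1 - b * c) ^ k =
      1 - ∑ j ∈ range k, ((-1) ^ j * k.choose (j + 1) : ℤ) • (b * c) ^ (j + 1) := by
    rw [sub_eq_neg_add, add_pow, sum_range_succ', sub_eq_add_neg, ← sum_neg_distrib, add_comm]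
    simp only [one_pow, mul_one, pow_zero, Nat.choose_zero_right, Nat.cast_one, zsmul_eq_mul]
    congr 1
    refine sum_congr rfl fun j _ => ?_
    push_cast
    ring
  rw [hbinom, ← h, mul_sub, mul_one, mul_sum, add_sub_left_comm, ← sum_sub_distrib,
    sum_eq_zero, add_zero]
  intro j _
  simp only [zsmul_eq_mul]
  ring

namespace Nat

theorem prod_ne_zero_of_mem_piFinset_Icc {d N : ℕ} {t : Fin d → ℕ}
    (ht : t ∈ Fintype.piFinset fun _ : Fin d => Icc 1 N) : ∏ i, t i ≠ 0 :=
  prod_ne_zero_iff.2 fun i _ => (one_le_iff_ne_zero.1 (mem_Icc.1 (Fintype.mem_piFinset.1 ht i)).1)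

theorem finMulAntidiag_eq_filter_piFinset_Icc {d n N : ℕ} (hn : n ≤ N) :
    finMulAntidiag d n = {t ∈ Fintype.piFinset fun _ : Fin d => Icc 1 N | ∏ i, t i = n} := by
  ext t
  simp only [mem_finMulAntidiag, mem_filter]
  constructor
  · rintro ⟨rfl, hn0⟩
    refine ⟨Fintype.mem_piFinset.2 fun i => mem_Icc.2 ⟨?_, ?_⟩, rfl⟩
    · exact one_le_iff_ne_zero.2
        (ne_zero_of_mem_finMulAntidiag (mem_finMulAntidiag.2 ⟨rfl, hn0⟩) i)
    · exact (le_of_dvd (pos_of_ne_zero hn0) (dvd_prod_of_mem _ (mem_univ i))).trans hn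
  · rintro ⟨ht, rfl⟩
    exact ⟨rfl, prod_ne_zero_of_mem_piFinset_Icc ht⟩

end Nat

namespace ArithmeticFunction

variable {R : Type*}

def evalAddMonoidHom [AddMonoid R] (n : ℕ) : ArithmeticFunction R →+ R where
  toFun f := f n
  map_zero' := rfl
  map_add' _ _ := rfl

@[simp]
theorem evalAddMonoidHom_apply [AddMonoid R] (n : ℕ) (f : ArithmeticFunction R) :
    evalAddMonoidHom n f = f n := rfl

theorem prod_apply_eq_sum_finMulAntidiag [CommSemiring R] {d : ℕ}
    (f : Fin d → ArithmeticFunction R) (n : ℕ) :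
    (∏ i, f i) n = ∑ t ∈ Nat.finMulAntidiag d n, ∏ i, f i (t i) := by
  induction d generalizing n with
  | zero =>
    by_cases hn : n = 1
    · simp [hn, Nat.finMulAntidiag_one]
    · simp [hn, Nat.finMulAntidiag_zero_left hn]
  | succ d ih =>
    simp_rw [Fin.prod_univ_succ, mul_apply, ih, mul_sum]
    rw [sum_sigma']
    refine sum_nbij' (fun p => Fin.cons p.1.1 p.2)
      (fun t : Fin (d + 1) → ℕ => ⟨(t 0, ∏ i, Fin.tail t i), Fin.tail t⟩)
      ?_ ?_ ?_ ?_ ?_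
    · rintro ⟨⟨a, b⟩, t⟩ h
      simp_all [Fin.prod_univ_succ]
    · intro t h
      obtain ⟨rfl, hn⟩ := Nat.mem_finMulAntidiag.1 h
      rw [Fin.prod_univ_succ] at hn
      simpa [Fin.tail, Fin.prod_univ_succ] using hn
    · rintro ⟨⟨a, b⟩, t⟩ h
      simp_all
    · intro t _
      simp
    · rintro ⟨⟨a, b⟩, t⟩ _
      simp

theorem prod_apply_eq_sum_piFinset_Icc [CommSemiring R] {d n N : ℕ} (hn : n ≤ N)
    (f : Fin d → ArithmeticFunction R) :
    (∏ i, f i) n =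
      ∑ t ∈ Fintype.piFinset (fun _ => Icc 1 N), if ∏ i, t i = n then ∏ i, f i (t i) else 0 := by
  rw [prod_apply_eq_sum_finMulAntidiag, Nat.finMulAntidiag_eq_filter_piFinset_Icc hn, sum_filter]

theorem prod_mul_prod_apply_eq_sum_piFinset_Icc [CommSemiring R] {d e n N : ℕ} (hn : n ≤ N)
    (f : Fin d → ArithmeticFunction R) (g : Fin e → ArithmeticFunction R) :
    ((∏ i, f i) * ∏ i, g i) n =
      ∑ s ∈ Fintype.piFinset (fun _ => Icc 1 N), ∑ t ∈ Fintype.piFinset (fun _ => Icc 1 N),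
        if (∏ i, s i) * ∏ i, t i = n then (∏ i, f i (s i)) * ∏ i, g i (t i) else 0 := by
  rw [mul_apply]
  have hexpand : ∀ p ∈ n.divisorsAntidiagonal, (∏ i, f i) p.1 * (∏ i, g i) p.2 =
      ∑ s ∈ Fintype.piFinset (fun _ => Icc 1 N), ∑ t ∈ Fintype.piFinset (fun _ => Icc 1 N),
        if (∏ i, s i, ∏ i, t i) = p then (∏ i, f i (s i)) * ∏ i, g i (t i) else 0 := by
    intro p hp
    have hp1 := Nat.divisor_le (Nat.fst_mem_divisors_of_mem_antidiagonal hp)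
    have hp2 := Nat.divisor_le (Nat.snd_mem_divisors_of_mem_antidiagonal hp)
    rw [prod_apply_eq_sum_piFinset_Icc (hp1.trans hn),
      prod_apply_eq_sum_piFinset_Icc (hp2.trans hn), sum_mul_sum]
    simp only [ite_zero_mul_ite_zero, Prod.ext_iff]
  rw [sum_congr rfl hexpand, sum_comm]
  refine sum_congr rfl fun s hs => ?_
  rw [sum_comm]
  refine sum_congr rfl fun t ht => ?_
  rw [sum_ite_eq]
  refine if_congr ?_ rfl rfl
  rw [Nat.mem_divisorsAntidiagonal, and_iff_left_iff_imp]
  rintro rfl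
  exact mul_ne_zero (Nat.prod_ne_zero_of_mem_piFinset_Icc hs)
    (Nat.prod_ne_zero_of_mem_piFinset_Icc ht)

theorem exists_ne_zero_of_mul_apply_ne_zero [Semiring R] {f g : ArithmeticFunction R} {n : ℕ}
    (h : (f * g) n ≠ 0) : ∃ a b, a * b = n ∧ f a ≠ 0 ∧ g b ≠ 0 := by
  rw [mul_apply] at h
  obtain ⟨p, hp, hne⟩ := exists_ne_zero_of_sum_ne_zero h
  exact ⟨p.1, p.2, (Nat.mem_divisorsAntidiagonal.1 hp).1, left_ne_zero_of_mul hne,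
    right_ne_zero_of_mul hne⟩

theorem mul_apply_eq_zero_of_le_mul [Semiring R] {f g : ArithmeticFunction R} {a b : ℝ}
    (ha : 0 ≤ a) (hb : 0 ≤ b) (hf : ∀ m : ℕ, (m : ℝ) ≤ a → f m = 0)
    (hg : ∀ m : ℕ, (m : ℝ) ≤ b → g m = 0) {n : ℕ} (hn : (n : ℝ) ≤ a * b) : (f * g) n = 0 := by
  by_contra h
  obtain ⟨d, e, rfl, hd, he⟩ := exists_ne_zero_of_mul_apply_ne_zero h
  have := mul_lt_mul'' (not_le.1 (mt (hf d) hd)) (not_le.1 (mt (hg e) he)) ha hb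
  push_cast at hn
  linarith

theorem mul_apply_eq_zero_of_lt_mul [Semiring R] {f g : ArithmeticFunction R} {a b : ℝ}
    (ha : 0 ≤ a) (hf : ∀ m : ℕ, (m : ℝ) < a → f m = 0)
    (hg : ∀ m : ℕ, (m : ℝ) ≤ b → g m = 0) {n : ℕ} (hn : (n : ℝ) < a * b) : (f * g) n = 0 := by
  by_contra h
  obtain ⟨d, e, rfl, hd, he⟩ := exists_ne_zero_of_mul_apply_ne_zero h
  have hd' : a ≤ d := not_lt.1 (mt (hf d) hd)
  have he' : b < e := not_le.1 (mt (hg e) he)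
  push_cast at hn
  nlinarith [mul_le_mul_of_nonneg_right hd' (Nat.cast_nonneg (α := ℝ) e),
    mul_le_mul_of_nonneg_left he'.le ha]

theorem pow_succ_apply_eq_zero_of_le_pow [Semiring R] {f : ArithmeticFunction R} {a : ℝ}
    (ha : 0 ≤ a) (hf : ∀ m : ℕ, (m : ℝ) ≤ a → f m = 0) (k : ℕ) :
    ∀ m : ℕ, (m : ℝ) ≤ a ^ (k + 1) → (f ^ (k + 1)) m = 0 := by
  induction k with
  | zero => simpa using hf
  | succ k ih =>
    rw [pow_succ a, pow_succ f]
    exact fun m => mul_apply_eq_zero_of_le_mul (by positivity) ha ih hf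

theorem vonMangoldt_apply_eq_zero_of_lt_two {m : ℕ} (hm : (m : ℝ) < 2) : Λ m = 0 := by
  by_contra h
  have := (vonMangoldt_ne_zero_iff.1 h).two_le
  exact absurd hm (not_lt.2 (by exact_mod_cast this))

end ArithmeticFunction

noncomputable def truncatedMoebius (z : ℝ) : ArithmeticFunction ℝ :=
  ⟨fun m => if (m : ℝ) ≤ z then (μ m : ℝ) else 0, by simp⟩

theorem truncatedMoebius_apply (z : ℝ) (m : ℕ) :
    truncatedMoebius z m = if (m : ℝ) ≤ z then (μ m : ℝ) else 0 := rfl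

theorem prod_truncatedMoebius_apply {d : ℕ} (z : ℝ) (m : Fin d → ℕ) :
    ∏ i, truncatedMoebius z (m i) = if ∀ i, (m i : ℝ) ≤ z then ∏ i, (μ (m i) : ℝ) else 0 := by
  simp only [truncatedMoebius_apply]
  convert Fintype.prod_ite_zero

theorem one_sub_zeta_mul_truncatedMoebius_apply_of_le {z : ℝ} {m : ℕ} (hm : (m : ℝ) ≤ z) :
    (1 - ζ * truncatedMoebius z) m = 0 := by
  have hagree : (ζ * truncatedMoebius z) m = ((ζ : ArithmeticFunction ℝ) * μ) m := by
    rw [coe_zeta_mul_apply, coe_zeta_mul_apply]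
    exact sum_congr rfl fun d hd => if_pos ((Nat.cast_le.2 (Nat.divisor_le hd)).trans hm)
  rw [← evalAddMonoidHom_apply, map_sub, evalAddMonoidHom_apply, evalAddMonoidHom_apply, hagree,
    coe_zeta_mul_coe_moebius, sub_self]

theorem truncatedMoebius_pow_mul_log_mul_zeta_pow_apply (z : ℝ) (j n : ℕ) :
    (truncatedMoebius z ^ (j + 1) * (log * (ζ : ArithmeticFunction ℝ) ^ j)) n =
      ∑ m ∈ Fintype.piFinset (fun _ : Fin (j + 1) => Icc 1 n),
        ∑ k ∈ Fintype.piFinset (fun _ : Fin (j + 1) => Icc 1 n),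
          if (∀ i, (m i : ℝ) ≤ z) ∧ (∏ i, m i) * (∏ i, k i) = n then
            (∏ i, (μ (m i) : ℝ)) * Real.log (k 0)
          else 0 := by
  let L : Fin (j + 1) → ArithmeticFunction ℝ := Fin.cons log fun _ => ζ
  have hF : truncatedMoebius z ^ (j + 1) = ∏ _i : Fin (j + 1), truncatedMoebius z := by simp
  have hL : log * (ζ : ArithmeticFunction ℝ) ^ j = ∏ i, L i := by simp [L, Fin.prod_univ_succ]
  rw [hF, hL, prod_mul_prod_apply_eq_sum_piFinset_Icc le_rfl]
  refine sum_congr rfl fun m _ => sum_congr rfl fun k hk => ?_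
  have hlog : ∏ i, L i (k i) = Real.log (k 0) := by
    have hk0 : ∀ i, k i ≠ 0 := fun i =>
      Nat.one_le_iff_ne_zero.1 (mem_Icc.1 (Fintype.mem_piFinset.1 hk i)).1
    simp [L, Fin.prod_univ_succ, hk0, log_apply]
  rw [hlog, prod_truncatedMoebius_apply, ite_mul, zero_mul, ← ite_and]
  exact if_congr and_comm rfl rfl

theorem stmt_4_general (x : ℝ) (n : ℕ) (hx : (n : ℝ) < 2 * x) :
    (Λ n : ℝ) =
      ∑ j ∈ Finset.range 4, (-1 : ℝ) ^ j * (Nat.choose 4 (j + 1)) *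
        ∑ m ∈ Fintype.piFinset (fun _ : Fin (j + 1) => Finset.Icc 1 n),
          ∑ k ∈ Fintype.piFinset (fun _ : Fin (j + 1) => Finset.Icc 1 n),
            if (∀ i, (m i : ℝ) ≤ x ^ ((1 : ℝ) / 4)) ∧ (∏ i, m i) * (∏ i, k i) = n then
              (∏ i, (ArithmeticFunction.moebius (m i) : ℝ)) * Real.log (k 0)
            else 0 := by
  set z := x ^ ((1 : ℝ) / 4) with hz
  have hx0 : 0 ≤ x := by linarith [n.cast_nonneg (α := ℝ)]
  have hz4 : z ^ 4 = x := by rw [hz, ← Real.rpow_natCast, ← Real.rpow_mul hx0]; norm_num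
  have hremainder :
      (Λ * (1 - ζ * truncatedMoebius z) ^ 4 : ArithmeticFunction ℝ) n = 0 :=
    mul_apply_eq_zero_of_lt_mul zero_le_two (fun _ => vonMangoldt_apply_eq_zero_of_lt_two)
      (pow_succ_apply_eq_zero_of_le_pow (Real.rpow_nonneg hx0 _)
        (fun _ => one_sub_zeta_mul_truncatedMoebius_apply_of_le) 3) (by rwa [hz4])
  have hHB := congrArg (evalAddMonoidHom n)
    (eq_sum_zsmul_choose_add_mul_one_sub_mul_pow vonMangoldt_mul_zeta (truncatedMoebius z) 4)
  simp only [map_add, map_sum, map_zsmul, evalAddMonoidHom_apply, hremainder, add_zero,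
    truncatedMoebius_pow_mul_log_mul_zeta_pow_apply] at hHB
  rw [hHB]
  refine sum_congr rfl fun j _ => ?_
  rw [zsmul_eq_mul]
  push_cast
  ring

/-- Heath-Brown's identity with `k = 4`: for `0 < n < 2x`,
`Λ(n) = Σ_{j=1}^{4} (−1)^{j+1} C(4,j) Σ_{m₁,…,m_j ≤ x^{1/4}} μ(m₁)⋯μ(m_j)
Σ_{m₁⋯m_j n₁⋯n_j = n} log n₁`. (The outer index below is `j+1` for `j ∈ range 4`.) -/
theorem stmt_4 (x : ℝ) (n : ℕ) (hn : 0 < n) (hx : (n : ℝ) < 2 * x) :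
    (Λ n : ℝ) =
      ∑ j ∈ Finset.range 4, (-1 : ℝ) ^ j * (Nat.choose 4 (j + 1)) *
        ∑ m ∈ Fintype.piFinset (fun _ : Fin (j + 1) => Finset.Icc 1 n),
          ∑ k ∈ Fintype.piFinset (fun _ : Fin (j + 1) => Finset.Icc 1 n),
            if (∀ i, (m i : ℝ) ≤ x ^ ((1 : ℝ) / 4)) ∧ (∏ i, m i) * (∏ i, k i) = n then
              (∏ i, (ArithmeticFunction.moebius (m i) : ℝ)) * Real.log (k 0)
            else 0 :=
  stmt_4_general x n hx
end

section
/- Let ν be a positive integer and Q, R ≥ 2 be reals. Define G_ν(Q,R) = {(q,r) ∈ [1,Q]×[1,R] : q,r positive integers, gcd(q,r)=1, ω(q) ≤ ν, ω(r) ≤ ν}, where ω counts distinct prime factors. Then there exists a partition of G_ν(Q,R) into at most (2 log(3QR))^{ν²} subsets G* such that for any two pairs (q₁,r₁), (q₂,r₂) in the same subset G*, one has gcd(q₁,r₂) = gcd(q₂,r₁) = 1. -/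
/-!
Let `M = min(⌊Q⌋, ⌊R⌋)` and `L = ⌊log₂ M⌋ + 1`, so that integers `≤ M` are determined by their
last `L` binary digits. Assume `⌊Q⌋ ≤ ⌊R⌋` (the other case swaps the arguments of `c` below).
For integers `a, b` let `c(a, b) = (i, bitᵢ a)`, where `i < L` is a position at which `a` and `b`
differ (`0` if there is none). If `a ≠ p` are both `≤ M`, then `c(a, p)` records a bit at which `a`
differs from `p`, while `c(p, b)` always records a bit of `p`; hence `c(p, b) ≠ c(a, p)`.

Colour `(q, r)` by the `ν × ν` matrix `(c(qᵢ, rⱼ))`, where `q₁, q₂, …` and `r₁, r₂, …` list the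
prime factors of `q` and `r`, padded with `0`. If a prime `p = q₁ᵢ = r₂ⱼ` divides `q₁` and `r₂` for
two pairs of the same colour, the `(i, j)` entries give `c(p, r₁ⱼ) = c(q₂ᵢ, p)`, while coprimality
within each pair gives `r₁ⱼ ≠ p ≠ q₂ᵢ`. There are `(2L)^{ν²}` colours, and `2L ≤ 2 log(3QR)`.
-/

open Finset

/-- Membership in the set `G_ν(Q,R)` of Fouvry's splitting lemma: pairs `(q,r)` of
positive integers with `q ≤ Q`, `r ≤ R`, `gcd(q,r) = 1`, and at most `ν` distinct
prime factors in each coordinate. -/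
def MemG (ν : ℕ) (Q R : ℝ) (p : ℕ × ℕ) : Prop :=
  1 ≤ p.1 ∧ (p.1 : ℝ) ≤ Q ∧ 1 ≤ p.2 ∧ (p.2 : ℝ) ≤ R ∧ Nat.Coprime p.1 p.2 ∧
    p.1.primeFactors.card ≤ ν ∧ p.2.primeFactors.card ≤ ν

theorem Nat.exists_testBit_ne_of_lt_two_pow {a b m : ℕ} (hab : a ≠ b) (ha : a < 2 ^ m)
    (hb : b < 2 ^ m) : ∃ i : Fin m, a.testBit i ≠ b.testBit i := by
  by_contra! h
  refine hab (Nat.eq_of_testBit_eq fun i => ?_)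
  rcases lt_or_ge i m with hi | hi
  · exact h ⟨i, hi⟩
  · rw [Nat.testBit_eq_false_of_lt (ha.trans_le (Nat.pow_le_pow_right two_pos hi)),
      Nat.testBit_eq_false_of_lt (hb.trans_le (Nat.pow_le_pow_right two_pos hi))]

def IsPairSeparator {S : Type*} (c : ℕ → ℕ → S) (X Y : ℕ) : Prop :=
  ∀ p a b, p ≤ X → p ≤ Y → a ≤ X → b ≤ Y → a ≠ p → b ≠ p → c p b ≠ c a p

theorem IsPairSeparator.swap {S : Type*} {c : ℕ → ℕ → S} {X Y : ℕ} (hc : IsPairSeparator c X Y) :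
    IsPairSeparator (fun a b => c b a) Y X :=
  fun p a b hpY hpX haY hbX hap hbp => (hc p b a hpX hpY hbX haY hbp hap).symm

theorem exists_isPairSeparator_left (X Y : ℕ) :
    ∃ c : ℕ → ℕ → Fin (Nat.log 2 X + 1) × Bool, IsPairSeparator c X Y := by
  classical
  let d : ℕ → ℕ → Fin (Nat.log 2 X + 1) := fun a b =>
    if h : ∃ i : Fin (Nat.log 2 X + 1), a.testBit i ≠ b.testBit i then h.choose else 0
  refine ⟨fun a b => (d a b, a.testBit (d a b)), fun p a b hp _ ha _ hap _ heq => ?_⟩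
  have hlt : ∀ x ≤ X, x < 2 ^ (Nat.log 2 X + 1) := fun x hx =>
    hx.trans_lt (Nat.lt_pow_succ_log_self one_lt_two X)
  have hdiff := Nat.exists_testBit_ne_of_lt_two_pow hap (hlt a ha) (hlt p hp)
  have hd : d a p = hdiff.choose := dif_pos hdiff
  obtain ⟨hi, hbit⟩ := Prod.mk.inj heq
  rw [hi, hd] at hbit
  exact hdiff.choose_spec hbit.symm

theorem exists_isPairSeparator (X Y : ℕ) :
    ∃ c : ℕ → ℕ → Fin (Nat.log 2 (min X Y) + 1) × Bool, IsPairSeparator c X Y := by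
  rcases le_total X Y with h | h
  · rw [min_eq_left h]
    exact exists_isPairSeparator_left X Y
  · rw [min_eq_right h]
    obtain ⟨c, hc⟩ := exists_isPairSeparator_left Y X
    exact ⟨_, hc.swap⟩

noncomputable def primeFactorAt (n i : ℕ) : ℕ :=
  n.primeFactors.toList.getD i 0

theorem primeFactorAt_eq_zero_or_mem (n i : ℕ) :
    primeFactorAt n i = 0 ∨ primeFactorAt n i ∈ n.primeFactors := by
  rcases lt_or_ge i n.primeFactors.toList.length with hi | hi
  · right
    rw [primeFactorAt, List.getD_eq_getElem _ _ hi, ← Finset.mem_toList]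
    exact List.getElem_mem hi
  · exact Or.inl (List.getD_eq_default _ _ hi)

theorem primeFactorAt_le (n i : ℕ) : primeFactorAt n i ≤ n := by
  rcases primeFactorAt_eq_zero_or_mem n i with h | h
  · exact h ▸ Nat.zero_le n
  · exact Nat.le_of_mem_primeFactors h

theorem primeFactorAt_ne_of_not_dvd {n p : ℕ} (hp : p ≠ 0) (h : ¬p ∣ n) (i : ℕ) :
    primeFactorAt n i ≠ p := by
  rcases primeFactorAt_eq_zero_or_mem n i with h' | h' <;> rintro rfl
  · exact hp h'
  · exact h (Nat.dvd_of_mem_primeFactors h')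

theorem exists_primeFactorAt_eq {n p : ℕ} (h : p ∈ n.primeFactors) :
    ∃ i < #n.primeFactors, primeFactorAt n i = p := by
  obtain ⟨i, hi, rfl⟩ := List.mem_iff_getElem.mp (Finset.mem_toList.mpr h)
  exact ⟨i, Finset.length_toList n.primeFactors ▸ hi, List.getD_eq_getElem _ _ hi⟩

noncomputable def pairColor {S : Type*} (c : ℕ → ℕ → S) (ν : ℕ) (x : ℕ × ℕ) :
    Fin ν → Fin ν → S :=
  fun i j => c (primeFactorAt x.1 i) (primeFactorAt x.2 j)

theorem coprime_of_pairColor_eq {S : Type*} {c : ℕ → ℕ → S} {X Y ν q₁ r₁ q₂ r₂ : ℕ}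
    (hc : IsPairSeparator c X Y) (hq₁ : q₁ ≠ 0) (hr₂ : r₂ ≠ 0) (hq₁X : q₁ ≤ X) (hq₂X : q₂ ≤ X)
    (hr₁Y : r₁ ≤ Y) (hr₂Y : r₂ ≤ Y) (h₁ : q₁.Coprime r₁) (h₂ : q₂.Coprime r₂)
    (hq₁ν : #q₁.primeFactors ≤ ν) (hr₂ν : #r₂.primeFactors ≤ ν) (heq : pairColor c ν (q₁, r₁) = pairColor c ν (q₂, r₂)) :
    q₁.Coprime r₂ := by
  by_contra hnot
  obtain ⟨p, hp, hpq₁, hpr₂⟩ := Nat.Prime.not_coprime_iff_dvd.mp hnot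
  obtain ⟨i, hi, hqi⟩ := exists_primeFactorAt_eq (Nat.mem_primeFactors.mpr ⟨hp, hpq₁, hq₁⟩)
  obtain ⟨j, hj, hrj⟩ := exists_primeFactorAt_eq (Nat.mem_primeFactors.mpr ⟨hp, hpr₂, hr₂⟩)
  have hij := congrFun (congrFun heq ⟨i, hi.trans_le hq₁ν⟩) ⟨j, hj.trans_le hr₂ν⟩
  simp only [pairColor, hqi, hrj] at hij
  refine hc p _ _ ((Nat.le_of_dvd (Nat.pos_of_ne_zero hq₁) hpq₁).trans hq₁X)
    ((Nat.le_of_dvd (Nat.pos_of_ne_zero hr₂) hpr₂).trans hr₂Y)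
    ((primeFactorAt_le _ _).trans hq₂X) ((primeFactorAt_le _ _).trans hr₁Y)
    (primeFactorAt_ne_of_not_dvd hp.ne_zero ?_ _) (primeFactorAt_ne_of_not_dvd hp.ne_zero ?_ _) hij
  · exact fun hpq₂ => hp.one_lt.ne' (Nat.eq_one_of_dvd_coprimes h₂ hpq₂ hpr₂)
  · exact fun hpr₁ => hp.one_lt.ne' (Nat.eq_one_of_dvd_coprimes h₁ hpq₁ hpr₁)

theorem MemG.coprime_of_pairColor_eq {S : Type*} {c : ℕ → ℕ → S} {ν : ℕ} {Q R : ℝ}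
    {x y : ℕ × ℕ} (hc : IsPairSeparator c ⌊Q⌋₊ ⌊R⌋₊)
    (hx : MemG ν Q R x) (hy : MemG ν Q R y) (heq : pairColor c ν x = pairColor c ν y) :
    x.1.Coprime y.2 := by
  obtain ⟨hq₁, hq₁Q, -, hr₁R, h₁, hq₁ν, -⟩ := hx
  obtain ⟨-, hq₂Q, hr₂, hr₂R, h₂, -, hr₂ν⟩ := hy
  exact _root_.coprime_of_pairColor_eq hc (by omega) (by omega) (Nat.le_floor hq₁Q)
    (Nat.le_floor hq₂Q) (Nat.le_floor hr₁R) (Nat.le_floor hr₂R) h₁ h₂ hq₁ν hr₂ν heq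

theorem natLog_two_add_one_le_log_three_mul {n : ℕ} (hn : n ≠ 0) {Q R : ℝ} (hQ : n ≤ Q)
    (hR : n ≤ R) : (Nat.log 2 n + 1 : ℝ) ≤ Real.log (3 * Q * R) := by
  have hn₀ : (0 : ℝ) < n := by exact_mod_cast Nat.pos_of_ne_zero hn
  have hpow : (2 : ℝ) ^ Nat.log 2 n ≤ n := by exact_mod_cast Nat.pow_log_le_self 2 hn
  have hlogn : Nat.log 2 n * Real.log 2 ≤ Real.log n := by
    rw [← Real.log_pow]
    exact Real.log_le_log (by positivity) hpow
  have hQ₀ := hn₀.trans_le hQ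
  have hR₀ := hn₀.trans_le hR
  have hlogQ := Real.log_le_log hn₀ hQ
  have hlogR := Real.log_le_log hn₀ hR
  have hlog3 : 1 < Real.log 3 := by
    rw [Real.lt_log_iff_exp_lt (by norm_num)]
    exact Real.exp_one_lt_d9.trans (by norm_num)
  rw [Real.log_mul (by positivity) hR₀.ne', Real.log_mul three_ne_zero hQ₀.ne']
  nlinarith [Real.log_two_gt_d9, (Nat.cast_nonneg (Nat.log 2 n) : (0 : ℝ) ≤ _)]

theorem stmt_5_general (ν : ℕ) (Q R : ℝ) (hQ : 2 ≤ Q) (hR : 2 ≤ R) :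
    ∃ (k : ℕ) (f : ℕ × ℕ → ℕ),
      (k : ℝ) ≤ (2 * Real.log (3 * Q * R)) ^ (ν ^ 2) ∧
      (∀ p : ℕ × ℕ, MemG ν Q R p → f p < k) ∧
      (∀ p₁ p₂ : ℕ × ℕ, MemG ν Q R p₁ → MemG ν Q R p₂ → f p₁ = f p₂ →
        Nat.Coprime p₁.1 p₂.2 ∧ Nat.Coprime p₂.1 p₁.2) := by
  obtain ⟨c, hc⟩ := exists_isPairSeparator ⌊Q⌋₊ ⌊R⌋₊
  let e := Fintype.equivFin (Fin ν → Fin ν → Fin (Nat.log 2 (min ⌊Q⌋₊ ⌊R⌋₊) + 1) × Bool)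
  refine ⟨Fintype.card _, fun x => e (pairColor c ν x), ?_, fun x _ => (e _).isLt,
    fun x y hx hy hxy => ?_⟩
  · have hQ' : 2 ≤ ⌊Q⌋₊ := Nat.le_floor (by exact_mod_cast hQ)
    have hR' : 2 ≤ ⌊R⌋₊ := Nat.le_floor (by exact_mod_cast hR)
    have hL := natLog_two_add_one_le_log_three_mul (n := min ⌊Q⌋₊ ⌊R⌋₊) (by omega)
      ((Nat.cast_le.mpr (min_le_left _ _)).trans (Nat.floor_le (by linarith)))
      ((Nat.cast_le.mpr (min_le_right _ _)).trans (Nat.floor_le (by linarith)))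
    simp only [Fintype.card_fun, Fintype.card_prod, Fintype.card_fin, Fintype.card_bool, ← pow_mul,
      ← sq]
    push_cast
    exact pow_le_pow_left₀ (by positivity) (by linarith) _
  · have heq := e.injective (Fin.val_injective hxy)
    exact ⟨hx.coprime_of_pairColor_eq hc hy heq, hy.coprime_of_pairColor_eq hc hx heq.symm⟩

/-- Splitting into coprime sets (Fouvry): `G_ν(Q,R)` can be partitioned into at most
`(2 log(3QR))^{ν²}` classes (encoded by a coloring `f` with fewer than `k` colors) so
that any two pairs in the same class satisfy `gcd(q₁,r₂) = gcd(q₂,r₁) = 1`. -/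
theorem stmt_5 (ν : ℕ) (hν : 0 < ν) (Q R : ℝ) (hQ : 2 ≤ Q) (hR : 2 ≤ R) :
    ∃ (k : ℕ) (f : ℕ × ℕ → ℕ),
      (k : ℝ) ≤ (2 * Real.log (3 * Q * R)) ^ (ν ^ 2) ∧
      (∀ p : ℕ × ℕ, MemG ν Q R p → f p < k) ∧
      (∀ p₁ p₂ : ℕ × ℕ, MemG ν Q R p₁ → MemG ν Q R p₂ → f p₁ = f p₂ →
        Nat.Coprime p₁.1 p₂.2 ∧ Nat.Coprime p₂.1 p₁.2) :=
  stmt_5_general ν Q R hQ hR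
end

section
/- A-process (Weyl differencing for periodic functions): let q = q₁q₂ with gcd(q₁,q₂)=1, let Ψ₁ : Z/q₁Z → C and Ψ₂ : Z/q₂Z → C, and set Ψ = Ψ₁Ψ₂ (viewed as functions on Z). Let I be an interval of integers. Then |Σ_{n∈I} Ψ(n)|² ≪ (q₂/|I|) · U₂ · ( U₁ + Σ_{0<|l|<|I|/q₂} |Σ_{n, n+l q₂ ∈ I} Ψ₁(n) conj(Ψ₁(n+l q₂))| ), where U₁ = Σ_{n∈I} |Ψ₁(n)|² and U₂ = Σ_{n∈I₁} |Ψ₂(n)|² for some interval I₁ ⊇ I with |I₁| ≤ 2|I|. -/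
open Finset

/-!
Van der Corput's `A`-process. Let `T n = ∑_{0 ≤ m < H, n + m q₂ ∈ I} Ψ₁ (n + m q₂)`. Since `Ψ₂` has
period `q₂`, `H · ∑_{n ∈ I} Ψ₁ Ψ₂ = ∑_{n ∈ I₁} Ψ₂ n · T n`, where `I₁` is `I` extended to the left by
`(H - 1) q₂`. Cauchy–Schwarz bounds the square of this by `U₂ · ∑ |T|²`, and expanding `|T|²`
turns `∑ |T|²` into `∑_{m, m' < H}` of the correlations of `Ψ₁` at shift `(m' - m) q₂`, each shift
`l` occurring at most `H` times. Hence `H |∑ Ψ|² ≤ U₂ ∑_{|l| < H} |corr l|`, and `H = ⌈|I| / q₂⌉`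
gives the bound with constant `1`.
-/

section VanDerCorput

variable {𝕜 : Type*} [RCLike 𝕜]

open scoped ComplexConjugate

def shiftCorrelation (f : ℤ → 𝕜) (s : Finset ℤ) (d l : ℤ) : 𝕜 :=
  ∑ n ∈ s with n + l * d ∈ s, f n * conj (f (n + l * d))

def windowSum (f : ℤ → 𝕜) (s : Finset ℤ) (d : ℤ) (H : ℕ) (n : ℤ) : 𝕜 :=
  ∑ m ∈ range H, if n + m * d ∈ s then f (n + m * d) else 0

lemma norm_sum_mul_sq_le {ι : Type*} (s : Finset ι) (f g : ι → 𝕜) :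
    ‖∑ i ∈ s, f i * g i‖ ^ 2 ≤ (∑ i ∈ s, ‖f i‖ ^ 2) * ∑ i ∈ s, ‖g i‖ ^ 2 :=
  calc ‖∑ i ∈ s, f i * g i‖ ^ 2
      ≤ (∑ i ∈ s, ‖f i‖ * ‖g i‖) ^ 2 := by
        gcongr
        exact (norm_sum_le _ _).trans_eq (sum_congr rfl fun i _ => norm_mul _ _)
    _ ≤ _ := sum_mul_sq_le_sq_mul_sq s _ _

lemma sum_ite_add_mem {M : Type*} [AddCommMonoid M] {s s' : Finset ℤ} {c : ℤ}
    (hs : ∀ k ∈ s, k - c ∈ s') (φ : ℤ → M) :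
    ∑ n ∈ s', (if n + c ∈ s then φ n else 0) = ∑ k ∈ s, φ (k - c) := by
  rw [← sum_filter]
  refine sum_nbij' (· + c) (· - c) ?_ ?_ ?_ ?_ ?_
  · intro n hn
    exact (mem_filter.mp hn).2
  · intro k hk
    simpa [mem_filter] using ⟨hs k hk, hk⟩
  all_goals simp

variable (f g : ℤ → 𝕜) {s s' : Finset ℤ} {d : ℤ} {H : ℕ}

lemma natCast_mul_sum_mul_eq_sum_mul_windowSum (hg : Function.Periodic g d)
    (hs : ∀ m < H, ∀ k ∈ s, k - m * d ∈ s') :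
    (H : 𝕜) * ∑ k ∈ s, f k * g k = ∑ n ∈ s', g n * windowSum f s d H n := by
  rw [← card_range H, ← nsmul_eq_mul, ← sum_const, card_range]
  simp only [windowSum, mul_sum, mul_ite, mul_zero]
  conv_rhs => rw [sum_comm]
  refine sum_congr rfl fun m hm => ?_
  rw [sum_ite_add_mem (hs m (mem_range.mp hm))]
  refine sum_congr rfl fun k _ => ?_
  rw [hg.sub_nat_mul_eq, sub_add_cancel, mul_comm]

lemma sum_windowSum_mul_conj (hs : ∀ m < H, ∀ k ∈ s, k - m * d ∈ s') :
    ∑ n ∈ s', windowSum f s d H n * conj (windowSum f s d H n) =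
      ∑ m ∈ range H, ∑ m' ∈ range H, shiftCorrelation f s d ((m' : ℤ) - m) := by
  simp only [windowSum, map_sum, sum_mul_sum, apply_ite conj, map_zero, ite_zero_mul_ite_zero]
  rw [sum_comm]
  refine sum_congr rfl fun m hm => ?_
  rw [sum_comm]
  refine sum_congr rfl fun m' _ => ?_
  simp only [ite_and]
  rw [sum_ite_add_mem (hs m (mem_range.mp hm)), shiftCorrelation, sum_filter]
  refine sum_congr rfl fun k _ => ?_
  rw [sub_add_cancel, sub_add_eq_add_sub, add_sub_assoc, ← sub_mul]

lemma sum_sum_sub_le_mul_sum (F : ℤ → ℝ) (hF : ∀ l, 0 ≤ F l) (H : ℕ) :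
    ∑ m ∈ range H, ∑ m' ∈ range H, F ((m' : ℤ) - m) ≤ H * ∑ l ∈ Ioo (-(H : ℤ)) H, F l := by
  calc ∑ m ∈ range H, ∑ m' ∈ range H, F ((m' : ℤ) - m)
      ≤ #(range H) • ∑ l ∈ Ioo (-(H : ℤ)) H, F l := by
        refine sum_le_card_nsmul _ _ _ fun m hm => ?_
        rw [← sum_image fun _ _ _ _ h => by simpa using h]
        refine sum_le_sum_of_subset_of_nonneg ?_ fun l _ _ => hF l
        intro l hl
        simp only [mem_image, mem_range] at hl hm
        obtain ⟨m', hm', rfl⟩ := hl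
        rw [mem_Ioo]
        omega
    _ = H * ∑ l ∈ Ioo (-(H : ℤ)) H, F l := by rw [card_range, nsmul_eq_mul]

lemma norm_shiftCorrelation_zero (s : Finset ℤ) (d : ℤ) :
    ‖shiftCorrelation f s d 0‖ = ∑ n ∈ s, ‖f n‖ ^ 2 := by
  simp only [shiftCorrelation, zero_mul, add_zero, filter_mem_eq_inter, inter_self, RCLike.mul_conj]
  norm_cast
  exact Real.norm_of_nonneg (sum_nonneg fun _ _ => sq_nonneg _)

theorem natCast_mul_norm_sum_mul_sq_le (hg : Function.Periodic g d)
    (hs : ∀ m < H, ∀ k ∈ s, k - m * d ∈ s') :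
    H * ‖∑ k ∈ s, f k * g k‖ ^ 2 ≤
      (∑ n ∈ s', ‖g n‖ ^ 2) * ∑ l ∈ Ioo (-(H : ℤ)) H, ‖shiftCorrelation f s d l‖ := by
  set S := ‖∑ k ∈ s, f k * g k‖
  set U := ∑ n ∈ s', ‖g n‖ ^ 2
  set K := ∑ l ∈ Ioo (-(H : ℤ)) H, ‖shiftCorrelation f s d l‖
  set T := windowSum f s d H
  have hT : ∑ n ∈ s', ‖T n‖ ^ 2 ≤ H * K :=
    calc ∑ n ∈ s', ‖T n‖ ^ 2 = ‖∑ n ∈ s', T n * conj (T n)‖ := by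
          simp only [RCLike.mul_conj]
          norm_cast
          exact (Real.norm_of_nonneg (sum_nonneg fun _ _ => sq_nonneg _)).symm
      _ = ‖∑ m ∈ range H, ∑ m' ∈ range H, shiftCorrelation f s d ((m' : ℤ) - m)‖ := by
          rw [sum_windowSum_mul_conj f hs]
      _ ≤ ∑ m ∈ range H, ∑ m' ∈ range H, ‖shiftCorrelation f s d ((m' : ℤ) - m)‖ :=
          (norm_sum_le _ _).trans (sum_le_sum fun _ _ => norm_sum_le _ _)
      _ ≤ H * K := sum_sum_sub_le_mul_sum _ (fun _ => norm_nonneg _) H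
  have hHS : (H * S) ^ 2 ≤ U * (H * K) :=
    calc (H * S) ^ 2 = ‖∑ n ∈ s', g n * T n‖ ^ 2 := by
          rw [← natCast_mul_sum_mul_eq_sum_mul_windowSum f g hg hs, norm_mul, norm_natCast]
      _ ≤ U * ∑ n ∈ s', ‖T n‖ ^ 2 := norm_sum_mul_sq_le _ _ _
      _ ≤ U * (H * K) := mul_le_mul_of_nonneg_left hT (sum_nonneg fun _ _ => sq_nonneg _)
  rcases H.eq_zero_or_pos with rfl | hH
  · simp [U, K]
  · refine le_of_mul_le_mul_left ?_ (Nat.cast_pos.mpr hH : (0 : ℝ) < H)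
    linear_combination hHS

lemma sum_norm_shiftCorrelation_Ioo_le {a b q : ℤ} {H : ℕ} (hq : 0 < q) (hH : 0 < H)
    (hHq : ((H : ℤ) - 1) * q < b - a + 1) :
    ∑ l ∈ Ioo (-(H : ℤ)) H, ‖shiftCorrelation f (Icc a b) q l‖ ≤
      ∑ n ∈ Icc a b, ‖f n‖ ^ 2 +
        ∑ l ∈ (Icc (-(b - a + 1)) (b - a + 1)).filter (fun l : ℤ => l ≠ 0 ∧ |l| * q < b - a + 1),
          ‖shiftCorrelation f (Icc a b) q l‖ := by
  have h0 : (0 : ℤ) ∈ Ioo (-(H : ℤ)) H := by rw [mem_Ioo]; omega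
  rw [← add_sum_erase _ _ h0, norm_shiftCorrelation_zero]
  gcongr
  intro l hl
  rw [mem_erase, mem_Ioo] at hl
  obtain ⟨hl0, hlH⟩ := hl
  have habs : |l| * q ≤ (H - 1) * q := by gcongr; rw [abs_le]; omega
  have hle : |l| ≤ |l| * q := le_mul_of_one_le_right (abs_nonneg l) hq
  rw [mem_filter, mem_Icc, ← abs_le]
  exact ⟨by omega, hl0, by omega⟩

end VanDerCorput

lemma exists_sub_one_mul_lt_le_mul {N q : ℤ} (hN : 0 < N) (hq : 0 < q) :
    ∃ H : ℕ, 0 < H ∧ ((H : ℤ) - 1) * q < N ∧ N ≤ H * q := by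
  have hk : 0 ≤ (N - 1) / q := Int.ediv_nonneg (by omega) hq.le
  have hdiv := Int.mul_ediv_add_emod (N - 1) q
  have hmod := Int.emod_lt_of_pos (N - 1) hq
  have hmod' := Int.emod_nonneg (N - 1) hq.ne'
  refine ⟨((N - 1) / q + 1).toNat, by omega, ?_⟩
  rw [Int.toNat_of_nonneg (by omega)]
  constructor <;> nlinarith

lemma sub_natCast_mul_mem_Icc {a b d k : ℤ} {H m : ℕ} (hd : 0 ≤ d) (hm : m < H)
    (hk : k ∈ Icc a b) : k - m * d ∈ Icc (a - (H - 1) * d) b := by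
  have hmd : (m : ℤ) * d ≤ (H - 1) * d := by gcongr; omega
  have := mul_nonneg m.cast_nonneg hd
  rw [mem_Icc] at hk ⊢
  constructor <;> linarith

/-- `A`-process (Weyl differencing, Lemma 2.10): for `q = q₁q₂` with `(q₁,q₂)=1`,
`Ψ = Ψ₁Ψ₂` with `Ψᵢ` periodic of period `qᵢ`, and an interval `I = [a,b]` of integers,
`|Σ_{n∈I} Ψ(n)|² ≪ (q₂/|I|)·U₂·(U₁ + Σ_{0<|l|<|I|/q₂} |Σ_{n,n+lq₂∈I} Ψ₁(n) conj(Ψ₁(n+lq₂))|)`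
where `U₁ = Σ_{n∈I}|Ψ₁(n)|²` and `U₂ = Σ_{n∈I₁}|Ψ₂(n)|²` for some interval `I₁ ⊇ I`
with `|I₁| ≤ 2|I|`; the constant is absolute. -/
theorem stmt_6 :
    ∃ C : ℝ, 0 < C ∧
      ∀ (q₁ q₂ : ℕ), 0 < q₁ → 0 < q₂ → Nat.Coprime q₁ q₂ →
        ∀ (Ψ₁ Ψ₂ : ℤ → ℂ),
          (∀ n : ℤ, Ψ₁ (n + q₁) = Ψ₁ n) → (∀ n : ℤ, Ψ₂ (n + q₂) = Ψ₂ n) →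
          ∀ a b : ℤ, a ≤ b →
            ∃ a₁ b₁ : ℤ, a₁ ≤ a ∧ b ≤ b₁ ∧ b₁ - a₁ + 1 ≤ 2 * (b - a + 1) ∧
              (‖∑ n ∈ Finset.Icc a b, Ψ₁ n * Ψ₂ n‖) ^ 2 ≤
                C * ((q₂ : ℝ) / ((b - a + 1 : ℤ) : ℝ)) *
                  (∑ n ∈ Finset.Icc a₁ b₁, (‖Ψ₂ n‖) ^ 2) *
                  ((∑ n ∈ Finset.Icc a b, (‖Ψ₁ n‖) ^ 2) +
                    ∑ l ∈ (Finset.Icc (-(b - a + 1)) (b - a + 1)).filter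
                        (fun l : ℤ => l ≠ 0 ∧ |l| * (q₂ : ℤ) < b - a + 1),
                      ‖∑ n ∈ (Finset.Icc a b).filter
                          (fun n : ℤ => n + l * (q₂ : ℤ) ∈ Finset.Icc a b),
                        Ψ₁ n * (starRingEnd ℂ) (Ψ₁ (n + l * (q₂ : ℤ)))‖) := by
  refine ⟨1, one_pos, fun q₁ q₂ _ hq₂ _ Ψ₁ Ψ₂ _ hΨ₂ a b hab => ?_⟩
  have hq : (0 : ℤ) < q₂ := by exact_mod_cast hq₂
  have hN : (0 : ℤ) < b - a + 1 := by omega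
  obtain ⟨H, hH, hHq, hNH⟩ := exists_sub_one_mul_lt_le_mul hN hq
  refine ⟨a - (H - 1) * q₂, b, by nlinarith, le_rfl, by omega, ?_⟩
  have hvdc := natCast_mul_norm_sum_mul_sq_le (s := Icc a b) (H := H) Ψ₁ Ψ₂ hΨ₂
    fun m hm k hk => sub_natCast_mul_mem_Icc hq.le hm hk
  have hK := sum_norm_shiftCorrelation_Ioo_le Ψ₁ hq hH hHq
  simp only [shiftCorrelation] at hvdc hK
  have hNH' : ((b - a + 1 : ℤ) : ℝ) ≤ H * q₂ := by exact_mod_cast hNH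
  have hU₂ : 0 ≤ ∑ n ∈ Icc (a - (H - 1) * q₂) b, ‖Ψ₂ n‖ ^ 2 := sum_nonneg fun _ _ => sq_nonneg _
  rw [one_mul, div_mul_eq_mul_div, div_mul_eq_mul_div, le_div_iff₀ (by exact_mod_cast hN)]
  linarith [mul_le_mul_of_nonneg_left hvdc q₂.cast_nonneg,
    mul_le_mul_of_nonneg_left hK (mul_nonneg q₂.cast_nonneg hU₂),
    mul_le_mul_of_nonneg_left hNH' (sq_nonneg ‖∑ n ∈ Icc a b, Ψ₁ n * Ψ₂ n‖)]
end

section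
/- Change-of-moduli congruence (simplified form of Lemma 2.6): let q₁, q₂, r₁, r₂, s, n₁, n₂, a₁, a₂ be integers with q₁, q₂, r₁, r₂, s pairwise coprime, gcd(n₁, q₁r₁s) = gcd(n₂, q₂r₂s) = gcd(n₁,n₂) = 1, and n₁ ≡ n₂ (mod s). Suppose ϱ is a solution modulo q₁q₂r₁r₂s to the system ϱn₁ ≡ a₁ (mod r₁s), ϱn₂ ≡ a₁ (mod r₂s), ϱn₁ ≡ a₂ (mod q₁), ϱn₂ ≡ a₂ (mod q₂). Then ϱ/(q₁q₂r₁r₂s) ≡ a₁·((n₁−n₂)/s)·(q₁r₁n₂)^{−1}/(q₂r₂n₁) + (a₂−a₁)·(q₂r₁r₂sn₁)^{−1}/q₁ + (a₂−a₁)·(q₁r₁r₂sn₂)^{−1}/q₂ + a₁/(q₁q₂r₁r₂sn₁) (mod 1), where (m)^{−1} denotes the multiplicative inverse of m modulo the denominator of the fraction it appears in. -/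
/-!
Multiplying by `N = q₁q₂r₁r₂sn₁`, the claim says that an explicit integer `E` is divisible by `N`.
Since `q₁`, `r₁s` and `q₂r₂n₁` are pairwise coprime, it suffices to check divisibility by each.
Modulo `q₁` and `r₁s` this is immediate from the congruences for `ϱ` and `B`. Modulo `q₂r₂n₁`,
`E = n₁F - a₁(1 - q₁r₁n₂A)` up to a multiple of `q₂r₂n₁`, where `F = ϱ - a₁q₁r₁A - (a₂ - a₁)q₁r₁r₂sC`;
and `q₂r₂ ∣ F` because `n₂F ≡ 0` modulo both `q₂` and `r₂`, with `n₂` invertible modulo `q₂r₂`.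
-/

namespace ChangeOfModuli

variable (q₁ q₂ r₁ r₂ s n₁ n₂ a₁ a₂ ϱ A B C : ℤ)

/-- `q₁q₂r₁r₂sn₁` times the difference in `stmt_10`, with `((n₁ - n₂) / s) * s` cleared. -/
def numerator : ℤ :=
  ϱ * n₁ - a₁ * A * (q₁ * r₁) * (n₁ - n₂) - (a₂ - a₁) * B * (q₂ * r₁ * r₂ * s * n₁)
    - (a₂ - a₁) * C * (q₁ * r₁ * r₂ * s * n₁) - a₁

variable {q₁ q₂ r₁ r₂ s n₁ n₂ a₁ a₂ ϱ A B C}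

theorem q₁_dvd_numerator (hϱ : ϱ * n₁ ≡ a₂ [ZMOD q₁])
    (hB : (q₂ * r₁ * r₂ * s * n₁) * B ≡ 1 [ZMOD q₁]) :
    q₁ ∣ numerator q₁ q₂ r₁ r₂ s n₁ n₂ a₁ a₂ ϱ A B C := by
  have hq : q₁ ≡ 0 [ZMOD q₁] := Int.modEq_zero_iff_dvd.2 dvd_rfl
  rw [← Int.modEq_zero_iff_dvd]
  calc numerator q₁ q₂ r₁ r₂ s n₁ n₂ a₁ a₂ ϱ A B C
      = ϱ * n₁ - a₁ * A * (q₁ * r₁) * (n₁ - n₂) - (a₂ - a₁) * ((q₂ * r₁ * r₂ * s * n₁) * B)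
          - (a₂ - a₁) * C * (q₁ * r₁ * r₂ * s * n₁) - a₁ := by rw [numerator]; ring
    _ ≡ a₂ - a₁ * A * (0 * r₁) * (n₁ - n₂) - (a₂ - a₁) * 1
          - (a₂ - a₁) * C * (0 * r₁ * r₂ * s * n₁) - a₁ [ZMOD q₁] := by gcongr
    _ = 0 := by ring

theorem r₁_mul_s_dvd_numerator (hns : n₁ ≡ n₂ [ZMOD s]) (hϱ : ϱ * n₁ ≡ a₁ [ZMOD r₁ * s]) :
    r₁ * s ∣ numerator q₁ q₂ r₁ r₂ s n₁ n₂ a₁ a₂ ϱ A B C := by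
  obtain ⟨k, hk⟩ : s ∣ n₁ - n₂ := hns.symm.dvd
  have hrs : r₁ * s ≡ 0 [ZMOD r₁ * s] := Int.modEq_zero_iff_dvd.2 dvd_rfl
  rw [← Int.modEq_zero_iff_dvd]
  calc numerator q₁ q₂ r₁ r₂ s n₁ n₂ a₁ a₂ ϱ A B C
      = ϱ * n₁ - a₁ * A * q₁ * k * (r₁ * s) - (a₂ - a₁) * B * (q₂ * r₂ * n₁) * (r₁ * s)
          - (a₂ - a₁) * C * (q₁ * r₂ * n₁) * (r₁ * s) - a₁ := by rw [numerator, hk]; ring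
    _ ≡ a₁ - a₁ * A * q₁ * k * 0 - (a₂ - a₁) * B * (q₂ * r₂ * n₁) * 0
          - (a₂ - a₁) * C * (q₁ * r₂ * n₁) * 0 - a₁ [ZMOD r₁ * s] := by gcongr
    _ = 0 := by ring

theorem q₂_mul_r₂_dvd (hq₂r₂ : IsCoprime q₂ r₂) (hn₂ : IsCoprime n₂ (q₂ * r₂))
    (hϱq₂ : ϱ * n₂ ≡ a₂ [ZMOD q₂]) (hϱr₂ : ϱ * n₂ ≡ a₁ [ZMOD r₂])
    (hA : (q₁ * r₁ * n₂) * A ≡ 1 [ZMOD q₂ * r₂])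
    (hC : (q₁ * r₁ * r₂ * s * n₂) * C ≡ 1 [ZMOD q₂]) :
    q₂ * r₂ ∣ ϱ - a₁ * A * (q₁ * r₁) - (a₂ - a₁) * C * (q₁ * r₁ * r₂ * s) := by
  refine hn₂.symm.dvd_of_dvd_mul_left (hq₂r₂.mul_dvd ?_ ?_) <;> rw [← Int.modEq_zero_iff_dvd]
  · calc n₂ * (ϱ - a₁ * A * (q₁ * r₁) - (a₂ - a₁) * C * (q₁ * r₁ * r₂ * s))
        = ϱ * n₂ - a₁ * ((q₁ * r₁ * n₂) * A) - (a₂ - a₁) * ((q₁ * r₁ * r₂ * s * n₂) * C) := by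
          ring
      _ ≡ a₂ - a₁ * 1 - (a₂ - a₁) * 1 [ZMOD q₂] := by gcongr; exact hA.of_mul_right r₂
      _ = 0 := by ring
  · have hr : r₂ ≡ 0 [ZMOD r₂] := Int.modEq_zero_iff_dvd.2 dvd_rfl
    calc n₂ * (ϱ - a₁ * A * (q₁ * r₁) - (a₂ - a₁) * C * (q₁ * r₁ * r₂ * s))
        = ϱ * n₂ - a₁ * ((q₁ * r₁ * n₂) * A) - (a₂ - a₁) * C * (q₁ * r₁ * s * n₂) * r₂ := by
          ring
      _ ≡ a₁ - a₁ * 1 - (a₂ - a₁) * C * (q₁ * r₁ * s * n₂) * 0 [ZMOD r₂] := by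
          gcongr; exact hA.of_mul_left q₂
      _ = 0 := by ring

theorem q₂_mul_r₂_mul_n₁_dvd_numerator (hq₂r₂ : IsCoprime q₂ r₂) (hn₂ : IsCoprime n₂ (q₂ * r₂))
    (hϱq₂ : ϱ * n₂ ≡ a₂ [ZMOD q₂]) (hϱr₂ : ϱ * n₂ ≡ a₁ [ZMOD r₂])
    (hA : (q₁ * r₁ * n₂) * A ≡ 1 [ZMOD q₂ * r₂ * n₁])
    (hC : (q₁ * r₁ * r₂ * s * n₂) * C ≡ 1 [ZMOD q₂]) :
    q₂ * r₂ * n₁ ∣ numerator q₁ q₂ r₁ r₂ s n₁ n₂ a₁ a₂ ϱ A B C := by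
  have hF := q₂_mul_r₂_dvd hq₂r₂ hn₂ hϱq₂ hϱr₂ (hA.of_mul_right n₁) hC
  have hE : numerator q₁ q₂ r₁ r₂ s n₁ n₂ a₁ a₂ ϱ A B C
      = (ϱ - a₁ * A * (q₁ * r₁) - (a₂ - a₁) * C * (q₁ * r₁ * r₂ * s)) * n₁
        - (a₂ - a₁) * B * r₁ * s * (q₂ * r₂ * n₁) - a₁ * (1 - (q₁ * r₁ * n₂) * A) := by
    rw [numerator]; ring
  rw [hE]
  exact ((mul_dvd_mul_right hF n₁).sub (dvd_mul_left _ _)).sub (hA.dvd.mul_left a₁)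

end ChangeOfModuli

open ChangeOfModuli

theorem stmt_10_general (q₁ q₂ r₁ r₂ s n₁ n₂ a₁ a₂ ϱ A B C : ℤ)
    (hq₁ : 0 < q₁) (hq₂ : 0 < q₂) (hr₁ : 0 < r₁) (hr₂ : 0 < r₂) (hs : 0 < s)
    (h12 : IsCoprime q₁ q₂) (h13 : IsCoprime q₁ r₁) (h14 : IsCoprime q₁ r₂)
    (h15 : IsCoprime q₁ s) (h23 : IsCoprime q₂ r₁) (h24 : IsCoprime q₂ r₂)
    (h25 : IsCoprime q₂ s) (h34 : IsCoprime r₁ r₂)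
    (h45 : IsCoprime r₂ s)
    (hn₁ : n₁ ≠ 0)
    (hn₁co : IsCoprime n₁ (q₁ * r₁ * s)) (hn₂co : IsCoprime n₂ (q₂ * r₂ * s))
    (hns : n₁ ≡ n₂ [ZMOD s])
    (hϱ1 : ϱ * n₁ ≡ a₁ [ZMOD r₁ * s]) (hϱ2 : ϱ * n₂ ≡ a₁ [ZMOD r₂ * s])
    (hϱ3 : ϱ * n₁ ≡ a₂ [ZMOD q₁]) (hϱ4 : ϱ * n₂ ≡ a₂ [ZMOD q₂])
    (hA : (q₁ * r₁ * n₂) * A ≡ 1 [ZMOD q₂ * r₂ * n₁])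
    (hB : (q₂ * r₁ * r₂ * s * n₁) * B ≡ 1 [ZMOD q₁])
    (hC : (q₁ * r₁ * r₂ * s * n₂) * C ≡ 1 [ZMOD q₂]) :
    ∃ z : ℤ,
      (ϱ : ℚ) / ((q₁ * q₂ * r₁ * r₂ * s : ℤ) : ℚ)
        - ((a₁ : ℚ) * (((n₁ - n₂) / s : ℚ)) * (A : ℚ) / ((q₂ * r₂ * n₁ : ℤ) : ℚ)
          + ((a₂ - a₁ : ℤ) : ℚ) * (B : ℚ) / (q₁ : ℚ)
          + ((a₂ - a₁ : ℤ) : ℚ) * (C : ℚ) / (q₂ : ℚ)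
          + (a₁ : ℚ) / ((q₁ * q₂ * r₁ * r₂ * s * n₁ : ℤ) : ℚ)) = (z : ℚ) := by
  have hcop₁ : IsCoprime q₁ (r₁ * s) := h13.mul_right h15
  obtain ⟨⟨hn₁q₁, hn₁r₁⟩, hn₁s⟩ : (IsCoprime n₁ q₁ ∧ IsCoprime n₁ r₁) ∧ IsCoprime n₁ s := by
    simpa only [IsCoprime.mul_right_iff] using hn₁co
  have hcop₂ : IsCoprime (q₁ * (r₁ * s)) (q₂ * r₂ * n₁) :=
    ((h12.mul_right h14).mul_right hn₁q₁.symm).mul_left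
      (((h23.symm.mul_right h34).mul_right hn₁r₁.symm).mul_left
        ((h25.symm.mul_right h45.symm).mul_right hn₁s.symm))
  obtain ⟨z, hz⟩ : q₁ * (r₁ * s) * (q₂ * r₂ * n₁) ∣ numerator q₁ q₂ r₁ r₂ s n₁ n₂ a₁ a₂ ϱ A B C :=
    hcop₂.mul_dvd (hcop₁.mul_dvd (q₁_dvd_numerator hϱ3 hB) (r₁_mul_s_dvd_numerator hns hϱ1))
      (q₂_mul_r₂_mul_n₁_dvd_numerator h24 hn₂co.of_mul_right_left hϱ4 (hϱ2.of_mul_right s) hA hC)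
  refine ⟨z, ?_⟩
  have hzQ : (numerator q₁ q₂ r₁ r₂ s n₁ n₂ a₁ a₂ ϱ A B C : ℚ)
      = (q₁ * (r₁ * s) * (q₂ * r₂ * n₁) : ℚ) * z := by exact_mod_cast hz
  simp only [numerator] at hzQ
  push_cast at hzQ ⊢
  field_simp
  linear_combination hzQ

/-- Change-of-moduli congruence (Lemma 2.6, simplified as in (3.8) of the paper):
with `q₁,q₂,r₁,r₂,s` pairwise coprime positive integers, `n₁,n₂` nonzero integers
coprime to the indicated moduli and to each other with `s ∣ n₁ − n₂`, and `ϱ` solving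
the displayed system, one has
`ϱ/(q₁q₂r₁r₂s) ≡ a₁·((n₁−n₂)/s)·A/(q₂r₂n₁) + (a₂−a₁)·B/q₁ + (a₂−a₁)·C/q₂
 + a₁/(q₁q₂r₁r₂sn₁) (mod 1)`,
where `A,B,C` are inverses of `q₁r₁n₂ mod q₂r₂n₁`, of `q₂r₁r₂sn₁ mod q₁`, and of
`q₁r₁r₂sn₂ mod q₂`, respectively. -/
theorem stmt_10 (q₁ q₂ r₁ r₂ s n₁ n₂ a₁ a₂ ϱ A B C : ℤ)
    (hq₁ : 0 < q₁) (hq₂ : 0 < q₂) (hr₁ : 0 < r₁) (hr₂ : 0 < r₂) (hs : 0 < s)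
    (h12 : IsCoprime q₁ q₂) (h13 : IsCoprime q₁ r₁) (h14 : IsCoprime q₁ r₂)
    (h15 : IsCoprime q₁ s) (h23 : IsCoprime q₂ r₁) (h24 : IsCoprime q₂ r₂)
    (h25 : IsCoprime q₂ s) (h34 : IsCoprime r₁ r₂) (h35 : IsCoprime r₁ s)
    (h45 : IsCoprime r₂ s)
    (hn₁ : n₁ ≠ 0) (hn₂ : n₂ ≠ 0)
    (hn₁co : IsCoprime n₁ (q₁ * r₁ * s)) (hn₂co : IsCoprime n₂ (q₂ * r₂ * s))
    (hn₁₂ : IsCoprime n₁ n₂)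
    (ha₁ : IsCoprime a₁ (r₁ * r₂ * s)) (ha₂ : IsCoprime a₂ (q₁ * q₂))
    (hns : n₁ ≡ n₂ [ZMOD s])
    (hϱ1 : ϱ * n₁ ≡ a₁ [ZMOD r₁ * s]) (hϱ2 : ϱ * n₂ ≡ a₁ [ZMOD r₂ * s])
    (hϱ3 : ϱ * n₁ ≡ a₂ [ZMOD q₁]) (hϱ4 : ϱ * n₂ ≡ a₂ [ZMOD q₂])
    (hA : (q₁ * r₁ * n₂) * A ≡ 1 [ZMOD q₂ * r₂ * n₁])
    (hB : (q₂ * r₁ * r₂ * s * n₁) * B ≡ 1 [ZMOD q₁])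
    (hC : (q₁ * r₁ * r₂ * s * n₂) * C ≡ 1 [ZMOD q₂]) :
    ∃ z : ℤ,
      (ϱ : ℚ) / ((q₁ * q₂ * r₁ * r₂ * s : ℤ) : ℚ)
        - ((a₁ : ℚ) * (((n₁ - n₂) / s : ℚ)) * (A : ℚ) / ((q₂ * r₂ * n₁ : ℤ) : ℚ)
          + ((a₂ - a₁ : ℤ) : ℚ) * (B : ℚ) / (q₁ : ℚ)
          + ((a₂ - a₁ : ℤ) : ℚ) * (C : ℚ) / (q₂ : ℚ)
          + (a₁ : ℚ) / ((q₁ * q₂ * r₁ * r₂ * s * n₁ : ℤ) : ℚ)) = (z : ℚ) :=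
  stmt_10_general q₁ q₂ r₁ r₂ s n₁ n₂ a₁ a₂ ϱ A B C hq₁ hq₂ hr₁ hr₂ hs h12 h13 h14 h15 h23 h24 h25
    h34 h45 hn₁ hn₁co hn₂co hns hϱ1 hϱ2 hϱ3 hϱ4 hA hB hC
end
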